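/- arXiv:math/0207168 — 3 statements merged into one kernel-verified Lean document; each statement's English description precedes it below -/
import Mathlib

section
/- Let C_∞{t} denote the subring of C_∞[[t]] consisting of power series Σ a_n t^n with |a_n|_∞ → 0 (i.e., convergent on the closed unit disc |t|_∞ ≤ 1). Suppose Φ ∈ Mat_{ℓ×ℓ}(k̄[t]) satisfies det Φ(0) ≠ 0 and ψ ∈ Mat_{ℓ×1}(C_∞{t}) satisfies ψ^(-1) = Φψ. Then all entries of ψ lie in E. -/
/-!
Write `a_n ∈ C^ℓ` for the `n`-th coefficient vector of `ψ`. Applying the `q`-power Frobenius to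
`ψ^(-1) = Φ ψ` gives `a_n = Φ(0)^(1) a_n^(1) + b_n`, where `b_n` is a polynomial expression in
the coefficients of `Φ` and in `a_0, …, a_{n-1}`.

* Algebraicity, by induction on `n`: over the field `K'` generated by the earlier data, `Φ(0)^(1)`
  is invertible, so the `q`-th powers of the entries of `a_n` lie in the `K'`-span of `1` and of
  these entries; the monomials in them of degree `< q` in each variable then span a finite
  `K'`-algebra.
* Entireness: non-archimedean estimates give `|a_n| ≤ B max_{n-d ≤ m ≤ n} |a_m|^q` with
  `d = deg Φ`; since `|a_n| → 0` this forces `B |a_n| ≤ (1/2)^(2^k)` for `n ≥ n₀ + k(d+1)`.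
* Finiteness over `k_∞`: once `|a_n|` is small, `y ↦ Φ(0)^(1) y^(1) + b_n` contracts towards
  `a_n`, so `a_n` lies in every closed subring containing `b_n` and the coefficients of `Φ`. The
  extension of `k_∞` generated by the coefficients of `Φ` and the first few `a_n` is finite,
  hence closed, and so contains every `a_n`.
-/

noncomputable section
open scoped Classical
set_option synthInstance.maxHeartbeats 1000000
set_option maxHeartbeats 1000000

variable (Fq : Type) [Field Fq] [Fintype Fq]
variable (C : Type) [NormedField C] [CompleteSpace C] [IsAlgClosed C]
  [Algebra (RatFunc Fq) C]

/-- The natural map `A = Fq[T] → C_∞`. -/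
def thetaP : Polynomial Fq →+* C :=
  (algebraMap (RatFunc Fq) C).comp (algebraMap (Polynomial Fq) (RatFunc Fq))

/-- The image of `T` in `C_∞`. -/
def Tc : C := thetaP Fq C Polynomial.X

/-- The image of `k = Fq(T)` in `C_∞`. -/
def kSub : Subfield C := (algebraMap (RatFunc Fq) C).fieldRange

/-- `k_∞ = Fq((1/T))`: the closure of `k` in `C_∞`. -/
def Kinf : Subfield C := (kSub Fq C).topologicalClosure

/-- Membership in the ring `E ⊆ k̄[[t]]`: all coefficients are algebraic over `k`,
`|a_n|^{1/n} → 0` (infinite radius of convergence), and the coefficients generate a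
finite extension of `k_∞`. -/
def memE (f : PowerSeries C) : Prop :=
  (∀ n : ℕ, IsAlgebraic (RatFunc Fq) (PowerSeries.coeff n f)) ∧
  Filter.Tendsto (fun n : ℕ => ‖PowerSeries.coeff n f‖ ^ (1 / (n : ℝ)))
    Filter.atTop (nhds 0) ∧
  FiniteDimensional ↥(Kinf Fq C)
    ↥(IntermediateField.adjoin ↥(Kinf Fq C)
        (Set.range fun n : ℕ => PowerSeries.coeff n f))

/-- The inverse of the `q`-power (Frobenius) map of `C_∞`. -/
def qInv (x : C) : C := Function.invFun (fun y : C => y ^ Fintype.card Fq) x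

/-- The inverse twist `f ↦ f^{(-1)}` on power series (coefficientwise `q`-th root). -/
def twistNegPS (f : PowerSeries C) : PowerSeries C :=
  PowerSeries.mk fun n => qInv Fq C (PowerSeries.coeff n f)

/-- Evaluation of an entire power series at a point of `C_∞`. -/
def psEval (f : PowerSeries C) (x : C) : C := ∑' n : ℕ, PowerSeries.coeff n f * x ^ n

open Finset Matrix PowerSeries Filter Topology
open scoped Polynomial

lemma tendsto_div_two_pow_div_atTop (n₀ D : ℕ) :
    Tendsto (fun n : ℕ => (n : ℝ) / 2 ^ ((n - n₀) / (D + 1))) atTop (𝓝 0) := by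
  set A : ℝ := n₀ + D + 1
  have hk : Tendsto (fun n : ℕ => (n - n₀) / (D + 1)) atTop atTop :=
    (Nat.tendsto_div_const_atTop D.succ_ne_zero).comp (tendsto_sub_atTop_nat n₀)
  have hlin :
      Tendsto (fun k : ℕ => 2 * A * (((k + 1 : ℕ) : ℝ) ^ 1 / 2 ^ (k + 1))) atTop (𝓝 0) := by
    simpa using ((tendsto_pow_const_div_const_pow_of_one_lt 1 one_lt_two).comp
      (tendsto_add_atTop_nat 1)).const_mul (2 * A)
  refine squeeze_zero (fun n => by positivity) (fun n => ?_) (hlin.comp hk)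
  dsimp only [Function.comp_apply]
  have h1 : n - n₀ < (n - n₀) / (D + 1) * (D + 1) + (D + 1) := Nat.lt_div_mul_add D.succ_pos
  generalize (n - n₀) / (D + 1) = k at h1 ⊢
  have hn : (n : ℝ) ≤ A * (k + 1) := by
    have h2 : n ≤ n₀ + (k + 1) * (D + 1) := by rw [add_one_mul]; omega
    have h2' : (n : ℝ) ≤ n₀ + (k + 1) * (D + 1) := by exact_mod_cast h2
    nlinarith [(Nat.cast_nonneg k : (0 : ℝ) ≤ k), (Nat.cast_nonneg n₀ : (0 : ℝ) ≤ n₀)]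
  calc (n : ℝ) / 2 ^ k ≤ A * (k + 1) / 2 ^ k := by gcongr
    _ = 2 * A * (((k + 1 : ℕ) : ℝ) ^ 1 / 2 ^ (k + 1)) := by
      push_cast; rw [pow_succ]; field_simp; ring

lemma le_half_pow_two_pow_of_le_pow {e : ℕ → ℝ} (he0 : ∀ n, 0 ≤ e n) {q D n₀ : ℕ} (hq : 2 ≤ q)
    (hrec : ∀ n, ∃ m, n - D ≤ m ∧ m ≤ n ∧ e n ≤ e m ^ q) (hn₀ : ∀ n ≥ n₀, e n ≤ 1 / 2) :
    ∀ k n, n₀ + k * (D + 1) ≤ n → e n ≤ (1 / 2) ^ 2 ^ k := by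
  intro k
  induction k with
  | zero => simpa using hn₀
  | succ k ih =>
    intro n hn
    obtain ⟨m, hm, -, hem⟩ := hrec n
    have hemk := ih m (by rw [add_one_mul] at hn; omega)
    have hem1 : e m ≤ 1 := hemk.trans (pow_le_one₀ (by norm_num) (by norm_num))
    calc e n ≤ e m ^ q := hem
      _ ≤ e m ^ 2 := pow_le_pow_of_le_one (he0 m) hem1 hq
      _ ≤ ((1 / 2) ^ 2 ^ k) ^ 2 := by gcongr; exact he0 m
      _ = (1 / 2) ^ 2 ^ (k + 1) := by rw [← pow_mul, pow_succ]

lemma tendsto_rpow_one_div_of_le_mul_pow {c : ℕ → ℝ} (hc0 : ∀ n, 0 ≤ c n)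
    (hc : Tendsto c atTop (𝓝 0)) {B : ℝ} (hB : 1 ≤ B) {q D : ℕ} (hq : 2 ≤ q)
    (hrec : ∀ n, ∃ m, n - D ≤ m ∧ m ≤ n ∧ c n ≤ B * c m ^ q) :
    Tendsto (fun n : ℕ => c n ^ (1 / (n : ℝ))) atTop (𝓝 0) := by
  have he0 : ∀ n, 0 ≤ B * c n := fun n => mul_nonneg (by linarith) (hc0 n)
  -- rescaling by `B` removes the constant from the recursion
  have herec : ∀ n, ∃ m, n - D ≤ m ∧ m ≤ n ∧ B * c n ≤ (B * c m) ^ q := by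
    intro n
    obtain ⟨m, hm1, hm2, hcm⟩ := hrec n
    refine ⟨m, hm1, hm2, ?_⟩
    calc B * c n ≤ B ^ 2 * c m ^ q := by nlinarith
      _ ≤ B ^ q * c m ^ q := by gcongr; exact pow_nonneg (hc0 m) q
      _ = (B * c m) ^ q := (mul_pow B (c m) q).symm
  obtain ⟨n₀, hn₀⟩ := eventually_atTop.1 <|
    (by simpa using hc.const_mul B : Tendsto (fun n => B * c n) atTop (𝓝 0)).eventually
      (eventually_le_nhds (by norm_num : (0 : ℝ) < 1 / 2))
  have hdecay := le_half_pow_two_pow_of_le_pow he0 hq herec hn₀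
  set x : ℕ → ℝ := fun n => (n : ℝ) / 2 ^ ((n - n₀) / (D + 1))
  have hx : Tendsto x atTop (𝓝[>] 0) :=
    tendsto_nhdsWithin_iff.2 ⟨tendsto_div_two_pow_div_atTop n₀ D,
      eventually_atTop.2 ⟨1, fun n hn => by
        simp only [x, Set.mem_Ioi]; exact div_pos (by exact_mod_cast hn) (by positivity)⟩⟩
  refine squeeze_zero' (Eventually.of_forall fun n => Real.rpow_nonneg (hc0 n) _) ?_
    ((tendsto_rpow_atTop_of_base_lt_one (1 / 2) (by norm_num) (by norm_num)).comp
      hx.inv_tendsto_nhdsGT_zero)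
  filter_upwards [eventually_ge_atTop n₀] with n hn
  have hk : n₀ + (n - n₀) / (D + 1) * (D + 1) ≤ n := by
    have := Nat.div_mul_le_self (n - n₀) (D + 1); omega
  calc c n ^ (1 / (n : ℝ)) ≤ (B * c n) ^ (1 / (n : ℝ)) := by
        gcongr; exacts [hc0 n, le_mul_of_one_le_left (hc0 n) hB]
    _ ≤ ((1 / 2 : ℝ) ^ 2 ^ ((n - n₀) / (D + 1))) ^ (1 / (n : ℝ)) := by
        gcongr; exacts [he0 n, hdecay _ n hk]
    _ = (1 / 2) ^ (x n)⁻¹ := by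
        rw [← Real.rpow_natCast, ← Real.rpow_mul (by norm_num)]
        simp [x, div_eq_mul_inv]

section Monomials

variable {K A ι : Type*} [Field K] [CommRing A] [Algebra K A] [Fintype ι]

lemma prod_pow_add_exponent (x : ι → A) (e f : ι → ℕ) :
    ∏ i, x i ^ (e + f) i = (∏ i, x i ^ e i) * ∏ i, x i ^ f i := by
  simp only [Pi.add_apply, pow_add, prod_mul_distrib]

variable [DecidableEq ι]

lemma prod_pow_pi_single (x : ι → A) (k : ι) (m : ℕ) :
    ∏ i, x i ^ Pi.single k m i = x k ^ m := by
  rw [Fintype.prod_eq_single k fun i hi => by rw [Pi.single_eq_of_ne hi, pow_zero],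
    Pi.single_eq_same]

lemma sum_add_pi_single (e : ι → ℕ) (k : ι) (m : ℕ) :
    ∑ i, (e + Pi.single k m : ι → ℕ) i = ∑ i, e i + m := by
  simp [sum_add_distrib]

lemma prod_pow_mem_span_of_pow_mem_span {q : ℕ} (hq : 2 ≤ q) (x : ι → A)
    (h : ∀ i, x i ^ q ∈ Submodule.span K (insert 1 (Set.range x))) (e : ι → ℕ) :
    ∏ i, x i ^ e i ∈
      Submodule.span K ((fun e : ι → ℕ => ∏ i, x i ^ e i) '' {e | ∀ i, e i < q}) := by
  induction hN : ∑ i, e i using Nat.strong_induction_on generalizing e with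
  | _ N ih =>
  by_cases hsmall : ∀ i, e i < q
  · exact Submodule.subset_span ⟨e, hsmall, rfl⟩
  push Not at hsmall
  obtain ⟨j, hj⟩ := hsmall
  set e' := e - Pi.single j q
  have he : e = e' + Pi.single j q := by
    ext i; by_cases hij : i = j
    · subst hij; simp only [e', Pi.add_apply, Pi.sub_apply, Pi.single_eq_same]; omega
    · simp [e', Pi.single_eq_of_ne hij]
  have hdeg : ∑ i, e' i + q = N := by rw [← sum_add_pi_single, ← he, hN]
  rw [he, prod_pow_add_exponent, prod_pow_pi_single]
  refine (Submodule.map_span_le _ _ _).2 ?_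
    (Submodule.mem_map_of_mem (f := LinearMap.mulLeft K (∏ i, x i ^ e' i)) (h j))
  rintro _ (rfl | ⟨k, rfl⟩)
  · simpa using ih _ (by omega) e' rfl
  · rw [LinearMap.mulLeft_apply, ← pow_one (x k), ← prod_pow_pi_single x k 1,
      ← prod_pow_add_exponent]
    exact ih _ (by omega) _ (sum_add_pi_single e' k 1)

lemma isIntegral_of_pow_mem_span {q : ℕ} (hq : 2 ≤ q) (x : ι → A)
    (h : ∀ i, x i ^ q ∈ Submodule.span K (insert 1 (Set.range x))) (i : ι) :
    IsIntegral K (x i) := by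
  set V := Submodule.span K ((fun e : ι → ℕ => ∏ i, x i ^ e i) '' {e | ∀ i, e i < q})
  have hmono := prod_pow_mem_span_of_pow_mem_span hq x h
  have hmul : ∀ a b, a ∈ V → b ∈ V → a * b ∈ V := by
    intro a b ha hb
    have hab := Submodule.mul_mem_mul ha hb
    rw [Submodule.span_mul_span] at hab
    refine Submodule.span_le.2 ?_ hab
    rintro _ ⟨_, ⟨e, -, rfl⟩, _, ⟨f, -, rfl⟩, rfl⟩
    simpa only [prod_pow_add_exponent, SetLike.mem_coe] using hmono (e + f)
  have hfin : {e : ι → ℕ | ∀ i, e i < q}.Finite := by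
    simpa [Set.pi] using Set.Finite.pi fun _ : ι => Set.finite_Iio q
  refine IsIntegral.of_mem_of_fg (V.toSubalgebra (by simpa using hmono 0) hmul)
    (Submodule.fg_span (hfin.image _)) _ ?_
  simpa [prod_pow_pi_single] using hmono (Pi.single i 1)

end Monomials

lemma mem_span_insert_one_of_eq_mulVec_add {K A n : Type*} [Field K] [CommRing A] [Algebra K A]
    [Fintype n] [DecidableEq n] {M : Matrix n n K} (hM : M.det ≠ 0) {b : n → K} {x y : n → A}
    (h : x = M.map (algebraMap K A) *ᵥ y + algebraMap K A ∘ b) (j : n) :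
    y j ∈ Submodule.span K (insert 1 (Set.range x)) := by
  have hy : y = M⁻¹.map (algebraMap K A) *ᵥ x - algebraMap K A ∘ (M⁻¹ *ᵥ b) := by
    have hinv : M⁻¹ * M = 1 := Matrix.nonsing_inv_mul M (isUnit_iff_ne_zero.2 hM)
    ext i
    simp [h, Matrix.mulVec_add, Matrix.mulVec_mulVec, ← Matrix.map_mul, hinv, RingHom.map_mulVec]
  rw [hy, Pi.sub_apply, Matrix.mulVec, dotProduct, Function.comp_apply,
    ← mul_one (algebraMap K A _)]
  simp only [Matrix.map_apply, ← Algebra.smul_def]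
  refine sub_mem (sum_mem fun k _ => Submodule.smul_mem _ _ ?_) (Submodule.smul_mem _ _ ?_)
  · exact Submodule.subset_span (Set.mem_insert_of_mem _ ⟨k, rfl⟩)
  · exact Submodule.subset_span (Set.mem_insert _ _)

lemma exists_ringHom_eq_pow_card {K L : Type*} [Field K] [Fintype K] [CommRing L] [Nontrivial L]
    (f : K →+* L) : ∃ σ : L →+* L, ∀ x, σ x = x ^ Fintype.card K := by
  obtain ⟨n, hp, hcard⟩ := FiniteField.card K (ringChar K)
  have : Fact (ringChar K).Prime := ⟨hp⟩
  have : CharP L (ringChar K) := charP_of_injective_ringHom f.injective _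
  exact ⟨iterateFrobenius L (ringChar K) n, fun x => by rw [iterateFrobenius_def, hcard]⟩

lemma IsAlgebraic.isIntegral_of_fieldRange_le {K L : Type*} [Field K] [Field L] [Algebra K L]
    {F : Subfield L} (hF : (algebraMap K L).fieldRange ≤ F) {x : L} (hx : IsAlgebraic K x) :
    IsIntegral F x := by
  let _ : Algebra K F := ((algebraMap K L).codRestrict F fun y => hF ⟨y, rfl⟩).toAlgebra
  have : IsScalarTower K F L := IsScalarTower.of_algebraMap_eq fun _ => rfl
  exact (hx.tower_top F).isIntegral

theorem Subfield.isClosed_of_finiteDimensional {C : Type*} [NormedField C] [CompleteSpace C]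
    (K : Subfield C) (hK : IsClosed (K : Set C)) (hKnt : ∃ x ∈ K, 1 < ‖x‖)
    (H : IntermediateField K C) [FiniteDimensional K H] : IsClosed (H : Set C) := by
  obtain ⟨x, hxK, hx⟩ := hKnt
  let _ : NontriviallyNormedField K := { non_trivial := ⟨⟨x, hxK⟩, hx⟩ }
  have : CompleteSpace K := hK.completeSpace_coe
  have : ContinuousSMul K C :=
    ⟨(continuous_subtype_val.comp continuous_fst).mul continuous_snd⟩
  exact H.toSubalgebra.toSubmodule.closed_of_finiteDimensional

section TwistedEquation

variable {R : Type*} [CommRing R] {ℓ : ℕ} (σ : R →+* R) (Φ : Matrix (Fin ℓ) (Fin ℓ) R[X])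
  (ψ : Fin ℓ → R⟦X⟧)

def lowerOrderPart (n : ℕ) (i : Fin ℓ) : R :=
  ∑ j, ∑ u ∈ range n, σ ((Φ i j).coeff (u + 1)) * σ (coeff (n - (u + 1)) (ψ j))

variable {σ Φ ψ}

lemma coeff_eq_sum_antidiagonal
    (h : ∀ i, ψ i = ∑ j, PowerSeries.map σ (Φ i j : R⟦X⟧) * PowerSeries.map σ (ψ j))
    (n : ℕ) (i : Fin ℓ) :
    coeff n (ψ i) = ∑ j, ∑ uv ∈ antidiagonal n,
      σ ((Φ i j).coeff uv.1) * σ (coeff uv.2 (ψ j)) := by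
  conv_lhs => rw [h i]
  simp only [map_sum, PowerSeries.coeff_mul, PowerSeries.coeff_map, Polynomial.coeff_coe]

lemma coeff_eq_mulVec_add_lowerOrderPart
    (h : ∀ i, ψ i = ∑ j, PowerSeries.map σ (Φ i j : R⟦X⟧) * PowerSeries.map σ (ψ j)) (n : ℕ) :
    (fun i => coeff n (ψ i)) = (σ.comp (Polynomial.evalRingHom 0)).mapMatrix Φ *ᵥ
      (σ ∘ fun j => coeff n (ψ j)) + lowerOrderPart σ Φ ψ n := by
  ext i
  rw [coeff_eq_sum_antidiagonal h, Pi.add_apply, lowerOrderPart, mulVec, dotProduct,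
    ← sum_add_distrib]
  refine sum_congr rfl fun j _ => ?_
  rw [Nat.sum_antidiagonal_eq_sum_range_succ_mk, sum_range_succ', add_comm]
  simp [Polynomial.coeff_zero_eq_eval_zero]

lemma lowerOrderPart_mem {S : Type*} [SetLike S R] [SubringClass S R] {s : S}
    (hσ : ∀ x ∈ s, σ x ∈ s) (hΦ : ∀ i j u, (Φ i j).coeff u ∈ s) {n : ℕ}
    (hψ : ∀ m < n, ∀ j, coeff m (ψ j) ∈ s) (i : Fin ℓ) :
    lowerOrderPart σ Φ ψ n i ∈ s :=
  sum_mem fun j _ => sum_mem fun u hu =>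
    mul_mem (hσ _ (hΦ i j _)) (hσ _ (hψ _ (by rw [mem_range] at hu; omega) j))

variable (Φ ψ) in
def initialCoeffs (n : ℕ) : Set R :=
  (⋃ i, ⋃ j, Set.range (Φ i j).coeff) ∪ ⋃ j, (fun m => coeff m (ψ j)) '' Set.Iio n

lemma initialCoeffs_finite (n : ℕ) : (initialCoeffs Φ ψ n).Finite :=
  (Set.finite_iUnion fun i => Set.finite_iUnion fun j => (Φ i j).finite_range_coeff).union
    (Set.finite_iUnion fun _ => (Set.finite_Iio n).image _)

lemma initialCoeffs_subset_iff {n : ℕ} {s : Set R} :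
    initialCoeffs Φ ψ n ⊆ s ↔
      (∀ i j u, (Φ i j).coeff u ∈ s) ∧ ∀ m < n, ∀ j, coeff m (ψ j) ∈ s := by
  simp only [initialCoeffs, Set.union_subset_iff, Set.iUnion_subset_iff, Set.range_subset_iff,
    Set.image_subset_iff]
  exact and_congr_right' ⟨fun h m hm j => h j hm, fun h j m hm => h m hm j⟩

end TwistedEquation

section Algebraicity

variable {L : Type*} [Field L] {ℓ : ℕ} {σ : L →+* L} {Φ : Matrix (Fin ℓ) (Fin ℓ) L[X]}
  {ψ : Fin ℓ → L⟦X⟧}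

theorem isAlgebraic_coeff {K : Type*} [Field K] [Algebra K L] {q : ℕ} (hq : 2 ≤ q)
    (hσ : ∀ x, σ x = x ^ q)
    (h : ∀ i, ψ i = ∑ j, PowerSeries.map σ (Φ i j : L⟦X⟧) * PowerSeries.map σ (ψ j))
    (hdet : Polynomial.eval 0 Φ.det ≠ 0) (hΦ : ∀ i j u, IsAlgebraic K ((Φ i j).coeff u)) :
    ∀ n j, IsAlgebraic K (coeff n (ψ j)) := by
  intro n
  induction n using Nat.strong_induction_on with | _ n ih =>
  set K' := IntermediateField.adjoin K (initialCoeffs Φ ψ n)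
  have hK' : initialCoeffs Φ ψ n ⊆ K' := IntermediateField.subset_adjoin K _
  obtain ⟨hΦK', hψK'⟩ := initialCoeffs_subset_iff.1 hK'
  have : Algebra.IsAlgebraic K K' := IntermediateField.isAlgebraic_adjoin fun x hx =>
    (initialCoeffs_subset_iff (s := {x | IsIntegral K x})).2
      ⟨fun i j u => (hΦ i j u).isIntegral, fun m hm j => (ih m hm j).isIntegral⟩ hx
  have hσK' : ∀ x ∈ K', σ x ∈ K' := fun x hx => hσ x ▸ pow_mem hx q
  -- `a_n = M a_n^(1) + b_n` is a linear system over `K'` for `a_n^(1)`, and `M` is invertible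
  let M₀ : Matrix (Fin ℓ) (Fin ℓ) K' := fun i j => ⟨σ (Polynomial.eval 0 (Φ i j)),
    Polynomial.coeff_zero_eq_eval_zero (Φ i j) ▸ hσK' _ (hΦK' i j 0)⟩
  let b₀ : Fin ℓ → K' := fun i =>
    ⟨lowerOrderPart σ Φ ψ n i, lowerOrderPart_mem hσK' hΦK' hψK' i⟩
  have hM₀ : M₀.det ≠ 0 := by
    have hdet' : algebraMap K' L M₀.det = (σ.comp (Polynomial.evalRingHom 0)) Φ.det := by
      rw [RingHom.map_det, RingHom.map_det]; rfl
    intro h0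
    rw [h0, map_zero, RingHom.comp_apply, hσ, Polynomial.coe_evalRingHom] at hdet'
    exact hdet (pow_eq_zero_iff (by omega) |>.1 hdet'.symm)
  have hspan := mem_span_insert_one_of_eq_mulVec_add hM₀ (b := b₀)
    (coeff_eq_mulVec_add_lowerOrderPart h n)
  have hint := isIntegral_of_pow_mem_span hq _ fun j => by
    simpa only [Function.comp_apply, hσ] using hspan j
  exact fun j => (isIntegral_trans _ (hint j)).isAlgebraic

end Algebraicity

lemma tendsto_pi_norm_zero {ι E : Type*} [Fintype ι] [SeminormedAddCommGroup E] {f : ℕ → ι → E}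
    (hf : ∀ i, Tendsto (fun n => ‖f n i‖) atTop (𝓝 0)) :
    Tendsto (fun n => ‖f n‖) atTop (𝓝 0) := by
  simpa using (tendsto_pi_nhds.2 fun i => tendsto_zero_iff_norm_tendsto_zero.2 (hf i) :
    Tendsto f atTop (𝓝 0)).norm

section Ultrametric

variable {𝕜 : Type*} [NormedField 𝕜] [IsUltrametricDist 𝕜] {ℓ q : ℕ} {σ : 𝕜 →+* 𝕜}
  {Φ : Matrix (Fin ℓ) (Fin ℓ) 𝕜[X]} {ψ : Fin ℓ → 𝕜⟦X⟧}

lemma norm_mulVec_comp_le (hq : 2 ≤ q) (hσ : ∀ x, σ x = x ^ q) {M : Matrix (Fin ℓ) (Fin ℓ) 𝕜}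
    {r : ℝ} (hr : r ≤ 1) (hM : ∀ i j, ‖M i j‖ * r ≤ 1 / 2) {z : Fin ℓ → 𝕜} (hz : ‖z‖ ≤ r) :
    ‖M *ᵥ (σ ∘ z)‖ ≤ ‖z‖ / 2 := by
  have h0 : 0 ≤ ‖z‖ / 2 := by positivity
  refine (pi_norm_le_iff_of_nonneg h0).2 fun i => ?_
  rw [mulVec, dotProduct]
  refine IsUltrametricDist.norm_sum_le_of_forall_le_of_nonneg h0 fun j _ => ?_
  have hzj : ‖z j‖ ^ q ≤ ‖z‖ * r :=
    calc ‖z j‖ ^ q ≤ ‖z‖ ^ q := by gcongr; exact norm_le_pi_norm z j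
      _ ≤ ‖z‖ ^ 2 := pow_le_pow_of_le_one (norm_nonneg z) (hz.trans hr) hq
      _ ≤ ‖z‖ * r := by rw [sq]; gcongr
  calc ‖M i j * (σ ∘ z) j‖ = ‖M i j‖ * ‖z j‖ ^ q := by simp [hσ]
    _ ≤ ‖M i j‖ * (‖z‖ * r) := by gcongr
    _ = ‖z‖ * (‖M i j‖ * r) := by ring
    _ ≤ ‖z‖ * (1 / 2) := by gcongr; exact hM i j
    _ = ‖z‖ / 2 := by ring

lemma tendsto_iterate_mulVec_add (hq : 2 ≤ q) (hσ : ∀ x, σ x = x ^ q)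
    {M : Matrix (Fin ℓ) (Fin ℓ) 𝕜} {x b : Fin ℓ → 𝕜} (hx : x = M *ᵥ (σ ∘ x) + b)
    (hx1 : ‖x‖ ≤ 1) (hM : ∀ i j, ‖M i j‖ * ‖x‖ ≤ 1 / 2) :
    Tendsto (fun k => (fun y => M *ᵥ (σ ∘ y) + b)^[k] 0) atTop (𝓝 x) := by
  set F := fun y => M *ᵥ (σ ∘ y) + b
  have hF : ∀ y, F y - x = M *ᵥ (σ ∘ (y - x)) := by
    intro y
    conv_lhs => rw [hx]
    ext i
    simp [F, mulVec, dotProduct, mul_sub]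
  have hbound : ∀ k, ‖F^[k] 0 - x‖ ≤ (1 / 2) ^ k * ‖x‖ := by
    intro k
    induction k with
    | zero => simp
    | succ k ih =>
      rw [Function.iterate_succ_apply', hF]
      have hk : ‖F^[k] 0 - x‖ ≤ ‖x‖ :=
        ih.trans (mul_le_of_le_one_left (norm_nonneg x) (pow_le_one₀ (by norm_num) (by norm_num)))
      calc ‖M *ᵥ (σ ∘ (F^[k] 0 - x))‖ ≤ ‖F^[k] 0 - x‖ / 2 :=
            norm_mulVec_comp_le hq hσ hx1 hM hk
        _ ≤ (1 / 2) ^ k * ‖x‖ / 2 := by gcongr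
        _ = (1 / 2) ^ (k + 1) * ‖x‖ := by ring
  rw [tendsto_iff_norm_sub_tendsto_zero]
  refine squeeze_zero (fun k => norm_nonneg _) hbound ?_
  simpa using (tendsto_pow_atTop_nhds_zero_of_lt_one (by norm_num : (0 : ℝ) ≤ 1 / 2)
    (by norm_num)).mul_const ‖x‖

lemma exists_norm_coeff_le_mul_pow (hσ : ∀ x, σ x = x ^ q)
    (h : ∀ i, ψ i = ∑ j, PowerSeries.map σ (Φ i j : 𝕜⟦X⟧) * PowerSeries.map σ (ψ j)) :
    ∃ B ≥ (1 : ℝ), ∃ D, ∀ n, ∃ m, n - D ≤ m ∧ m ≤ n ∧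
      ‖fun j => coeff n (ψ j)‖ ≤ B * ‖fun j => coeff m (ψ j)‖ ^ q := by
  set a : ℕ → Fin ℓ → 𝕜 := fun n j => coeff n (ψ j)
  obtain ⟨R, hR⟩ := ((Set.finite_iUnion fun i => Set.finite_iUnion fun j =>
    (Φ i j).finite_range_coeff).image norm).bddAbove
  have hR1 : ∀ i j u, ‖(Φ i j).coeff u‖ ≤ max R 1 := fun i j u =>
    (hR ⟨_, Set.mem_iUnion₂.2 ⟨i, j, u, rfl⟩, rfl⟩).trans (le_max_left _ _)
  set d : Fin ℓ × Fin ℓ → ℕ := fun ij => (Φ ij.1 ij.2).natDegree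
  set D := univ.sup d
  have hD : ∀ i j u, D < u → (Φ i j).coeff u = 0 := fun i j u hu =>
    Polynomial.coeff_eq_zero_of_natDegree_lt ((le_sup (f := d) (mem_univ (i, j))).trans_lt hu)
  refine ⟨max R 1 ^ q, one_le_pow₀ (le_max_right _ _), D, fun n => ?_⟩
  obtain ⟨m, hm, hmax⟩ := (Icc (n - D) n).exists_max_image (fun m => ‖a m‖) ⟨n, by simp⟩
  refine ⟨m, (mem_Icc.1 hm).1, (mem_Icc.1 hm).2, ?_⟩
  have h0 : 0 ≤ max R 1 ^ q * ‖a m‖ ^ q := by positivity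
  refine (pi_norm_le_iff_of_nonneg h0).2 fun i => ?_
  rw [coeff_eq_sum_antidiagonal h]
  refine IsUltrametricDist.norm_sum_le_of_forall_le_of_nonneg h0 fun j _ =>
    IsUltrametricDist.norm_sum_le_of_forall_le_of_nonneg h0 fun uv huv => ?_
  rcases le_or_gt uv.1 D with hu | hu
  · have hv : uv.2 ∈ Icc (n - D) n := by
      rw [HasAntidiagonal.mem_antidiagonal] at huv; rw [mem_Icc]; omega
    rw [norm_mul, hσ, hσ, norm_pow, norm_pow, ← mul_pow, ← mul_pow]
    gcongr
    · exact hR1 i j uv.1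
    · exact (norm_le_pi_norm (a uv.2) j).trans (hmax uv.2 hv)
  · rw [hD _ _ _ hu, map_zero, zero_mul, norm_zero]
    exact h0

theorem tendsto_norm_coeff_rpow_one_div (hq : 2 ≤ q) (hσ : ∀ x, σ x = x ^ q)
    (h : ∀ i, ψ i = ∑ j, PowerSeries.map σ (Φ i j : 𝕜⟦X⟧) * PowerSeries.map σ (ψ j))
    (hψ : ∀ i, Tendsto (fun n => ‖coeff n (ψ i)‖) atTop (𝓝 0)) (i : Fin ℓ) :
    Tendsto (fun n : ℕ => ‖coeff n (ψ i)‖ ^ (1 / (n : ℝ))) atTop (𝓝 0) := by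
  obtain ⟨B, hB, D, hrec⟩ := exists_norm_coeff_le_mul_pow hσ h
  refine squeeze_zero (fun n => Real.rpow_nonneg (norm_nonneg _) _) (fun n => ?_)
    (tendsto_rpow_one_div_of_le_mul_pow (fun n => norm_nonneg _) (tendsto_pi_norm_zero hψ)
      hB hq hrec)
  exact Real.rpow_le_rpow (norm_nonneg _) (norm_le_pi_norm (fun j => coeff n (ψ j)) i)
    (by positivity)

theorem exists_forall_coeff_mem_of_isClosed (hq : 2 ≤ q) (hσ : ∀ x, σ x = x ^ q)
    (h : ∀ i, ψ i = ∑ j, PowerSeries.map σ (Φ i j : 𝕜⟦X⟧) * PowerSeries.map σ (ψ j))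
    (hψ : ∀ i, Tendsto (fun n => ‖coeff n (ψ i)‖) atTop (𝓝 0)) :
    ∃ n₀, ∀ s : Subring 𝕜, IsClosed (s : Set 𝕜) → (∀ i j u, (Φ i j).coeff u ∈ s) →
      (∀ m < n₀, ∀ j, coeff m (ψ j) ∈ s) → ∀ n j, coeff n (ψ j) ∈ s := by
  set M := (σ.comp (Polynomial.evalRingHom 0)).mapMatrix Φ
  have ha := tendsto_pi_norm_zero hψ
  have hsmall : ∀ᶠ n in atTop, ‖fun j => coeff n (ψ j)‖ ≤ 1 ∧
      ∀ i j, ‖M i j‖ * ‖fun j => coeff n (ψ j)‖ ≤ 1 / 2 :=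
    (ha.eventually (eventually_le_nhds one_pos)).and <| eventually_all.2 fun i =>
      eventually_all.2 fun j => (ha.const_mul ‖M i j‖).eventually (eventually_le_nhds (by simp))
  obtain ⟨n₀, hn₀⟩ := eventually_atTop.1 hsmall
  refine ⟨n₀, fun s hs hΦs hψs n => ?_⟩
  induction n using Nat.strong_induction_on with | _ n ih =>
  rcases lt_or_ge n n₀ with hn | hn
  · exact hψs n hn
  have hσs : ∀ x ∈ s, σ x ∈ s := fun x hx => hσ x ▸ pow_mem hx q
  set F := fun y => M *ᵥ (σ ∘ y) + lowerOrderPart σ Φ ψ n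
  have hM : ∀ i j, M i j ∈ s := fun i j => by
    simpa [M, ← Polynomial.coeff_zero_eq_eval_zero] using hσs _ (hΦs i j 0)
  have hF : ∀ y ∈ Set.univ.pi fun _ => (s : Set 𝕜), F y ∈ Set.univ.pi fun _ => (s : Set 𝕜) :=
    fun y hy i _ => add_mem (sum_mem fun j _ => mul_mem (hM i j) (hσs _ (hy j trivial)) :
      ∑ j, M i j * σ (y j) ∈ s) (lowerOrderPart_mem hσs hΦs ih i)
  have hlim := tendsto_iterate_mulVec_add hq hσ (coeff_eq_mulVec_add_lowerOrderPart h n)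
    (hn₀ n hn).1 (hn₀ n hn).2
  exact fun j => (isClosed_set_pi fun _ _ => hs).mem_of_tendsto hlim
    (Eventually.of_forall fun k => Set.MapsTo.iterate hF k fun _ _ => zero_mem s) j trivial

theorem finiteDimensional_adjoin_coeff [CompleteSpace 𝕜] (F : Subfield 𝕜)
    (hF : IsClosed (F : Set 𝕜)) (hFnt : ∃ x ∈ F, 1 < ‖x‖) (hq : 2 ≤ q) (hσ : ∀ x, σ x = x ^ q)
    (h : ∀ i, ψ i = ∑ j, PowerSeries.map σ (Φ i j : 𝕜⟦X⟧) * PowerSeries.map σ (ψ j))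
    (hψ : ∀ i, Tendsto (fun n => ‖coeff n (ψ i)‖) atTop (𝓝 0))
    (hΦF : ∀ i j u, IsIntegral F ((Φ i j).coeff u))
    (hψF : ∀ n j, IsIntegral F (coeff n (ψ j))) (i : Fin ℓ) :
    FiniteDimensional F (IntermediateField.adjoin F (Set.range fun n => coeff n (ψ i))) := by
  obtain ⟨n₀, hn₀⟩ := exists_forall_coeff_mem_of_isClosed hq hσ h hψ
  set H := IntermediateField.adjoin F (initialCoeffs Φ ψ n₀)
  have : Finite (initialCoeffs Φ ψ n₀) := (initialCoeffs_finite n₀).to_subtype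
  have : FiniteDimensional F H := IntermediateField.finiteDimensional_adjoin fun x hx =>
    (initialCoeffs_subset_iff (s := {x | IsIntegral F x})).2 ⟨hΦF, fun m _ j => hψF m j⟩ hx
  obtain ⟨hΦH, hψH⟩ := initialCoeffs_subset_iff.1 (IntermediateField.subset_adjoin F
    (initialCoeffs Φ ψ n₀))
  have hmem := hn₀ H.toSubalgebra.toSubring (Subfield.isClosed_of_finiteDimensional F hF hFnt H)
    hΦH hψH
  have hle : IntermediateField.adjoin F (Set.range fun n => coeff n (ψ i)) ≤ H :=
    IntermediateField.adjoin_le_iff.2 (Set.range_subset_iff.2 fun n => hmem n i)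
  exact FiniteDimensional.of_injective (IntermediateField.inclusion hle).toLinearMap
    (IntermediateField.inclusion hle).injective

end Ultrametric

lemma qInv_pow_card {Fq : Type} [Fintype Fq] [Nonempty Fq] {C : Type} [NormedField C]
    [IsAlgClosed C] (x : C) : qInv Fq C x ^ Fintype.card Fq = x :=
  Function.invFun_eq (IsAlgClosed.exists_pow_nat_eq x Fintype.card_pos)

lemma map_twistNegPS {Fq : Type} [Fintype Fq] [Nonempty Fq] {C : Type} [NormedField C]
    [IsAlgClosed C] {σ : C →+* C} (hσ : ∀ x, σ x = x ^ Fintype.card Fq) (f : C⟦X⟧) :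
    PowerSeries.map σ (twistNegPS Fq C f) = f := by
  ext n
  simp [twistNegPS, hσ, qInv_pow_card]

theorem statement4
    (hna : ∀ x y : C, ‖x + y‖ ≤ max ‖x‖ ‖y‖)
    (hT : ‖Tc Fq C‖ = (Fintype.card Fq : ℝ))
    (ℓ : ℕ)
    (Φ : Matrix (Fin ℓ) (Fin ℓ) (Polynomial C))
    (hΦalg : ∀ i j n, IsAlgebraic (RatFunc Fq) ((Φ i j).coeff n))
    (hdet : Polynomial.eval 0 Φ.det ≠ 0)
    (ψ : Fin ℓ → PowerSeries C)
    (hψ : ∀ i, Filter.Tendsto (fun n : ℕ => ‖PowerSeries.coeff n (ψ i)‖)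
      Filter.atTop (nhds 0))
    (hfe : ∀ i, twistNegPS Fq C (ψ i) = ∑ j, (Φ i j : PowerSeries C) * ψ j) :
    ∀ i, memE Fq C (ψ i) := by
  have : IsUltrametricDist C :=
    IsUltrametricDist.isUltrametricDist_of_forall_norm_add_le_max_norm hna
  obtain ⟨σ, hσ⟩ := exists_ringHom_eq_pow_card
    ((algebraMap (RatFunc Fq) C).comp (algebraMap Fq (RatFunc Fq)))
  have hq : 2 ≤ Fintype.card Fq := Fintype.one_lt_card
  have htw : ∀ i, ψ i = ∑ j, PowerSeries.map σ (Φ i j : C⟦X⟧) * PowerSeries.map σ (ψ j) :=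
    fun i => by rw [← map_twistNegPS hσ (ψ i), hfe i, map_sum]; simp only [map_mul]
  have halg := isAlgebraic_coeff hq hσ htw hdet hΦalg
  have hkK : (algebraMap (RatFunc Fq) C).fieldRange ≤ Kinf Fq C :=
    (kSub Fq C).le_topologicalClosure
  have hKnt : ∃ x ∈ Kinf Fq C, 1 < ‖x‖ :=
    ⟨Tc Fq C, hkK ⟨_, rfl⟩, by rw [hT]; exact_mod_cast Fintype.one_lt_card⟩
  exact fun i => ⟨fun n => halg n i, tendsto_norm_coeff_rpow_one_div hq hσ htw hψ i,
    finiteDimensional_adjoin_coeff _ (Subfield.isClosed_topologicalClosure _) hKnt hq hσ htw hψ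
      (fun i j u => (hΦalg i j u).isIntegral_of_fieldRange_le hkK)
      (fun n j => (halg n j).isIntegral_of_fieldRange_le hkK) i⟩
end
end

section
/- Let L ⊇ K ⊇ F be a tower of commutative rings such that L and F are Dedekind domains and L is a finitely generated projective F-module. Then K is a Dedekind domain if and only if the quotient F-module L/K is projective. -/
/-!
Over the Dedekind domain `F`, the finitely generated module `L/K` is projective iff it is
torsion-free, i.e. iff `c * x ∈ K` with `0 ≠ c ∈ F` forces `x ∈ K`. As `K` is integral over `F`,
every nonzero `b ∈ K` divides a nonzero element of `F`, so this says that `K` is closed under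
division in `L`. Being finite over `F`, `K` is noetherian of dimension at most one, so it is
Dedekind iff integrally closed. Since `L` is integrally closed and integral over `K`, an element
of `Frac K` integral over `K` is an `x ∈ L` with `b * x ∈ K` for some `0 ≠ b ∈ K`; hence `K` is
integrally closed iff it is closed under division in `L`.
-/

noncomputable section
open scoped Classical

variable (L : Type) [CommRing L] [IsDomain L]

/-- A subring `K` containing the subring `F` is in particular an `F`-submodule of `L`. -/
def subringSubmodule (F K : Subring L) (hFK : F ≤ K) : Submodule ↥F L where
  carrier := K
  add_mem' := fun ha hb => K.add_mem ha hb
  zero_mem' := K.zero_mem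
  smul_mem' := fun c x hx => by
    rw [Subring.smul_def]
    exact K.mul_mem (hFK c.2) hx

open Module

theorem IsDedekindDomain.projective_iff_isTorsionFree {R M : Type*} [CommRing R]
    [IsDedekindDomain R] [AddCommGroup M] [Module R M] [Module.Finite R M] :
    Projective R M ↔ IsTorsionFree R M := by
  refine ⟨fun _ => inferInstance, fun _ => ?_⟩
  have : FinitePresentation R M := finitePresentation_of_finite R M
  exact Flat.projective_of_finitePresentation

theorem Algebra.IsIntegral.exists_ne_zero_dvd_algebraMap {R S : Type*} [CommRing R] [Nontrivial R]
    [CommRing S] [IsDomain S] [Algebra R S] [Algebra.IsIntegral R S] {b : S} (hb : b ≠ 0) :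
    ∃ c : R, c ≠ 0 ∧ b ∣ algebraMap R S c := by
  obtain ⟨c, hc, hc0⟩ := Submodule.exists_mem_ne_zero_of_ne_bot <|
    Ideal.comap_ne_bot_of_integral_mem hb (Ideal.mem_span_singleton_self b)
      (Algebra.IsIntegral.isIntegral (R := R) b)
  exact ⟨c, hc0, Ideal.mem_span_singleton.mp hc⟩

namespace Subring
variable {A : Type*} [CommRing A] (K : Subring A)

theorem algebraMap_fractionRing_injective :
    Function.Injective (algebraMap K (FractionRing A)) := by
  rw [IsScalarTower.algebraMap_eq K A (FractionRing A)]
  exact (IsFractionRing.injective A (FractionRing A)).comp Subtype.val_injective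

variable [IsDomain A]

def fractionRingMap : FractionRing K →ₐ[K] FractionRing A :=
  IsFractionRing.liftAlgHom (A := K) (g := Algebra.ofId K (FractionRing A))
    K.algebraMap_fractionRing_injective

theorem fractionRingMap_algebraMap (k : K) :
    K.fractionRingMap (algebraMap K (FractionRing K) k) = algebraMap A (FractionRing A) k :=
  (IsFractionRing.lift_algebraMap K.algebraMap_fractionRing_injective k).trans
    (IsScalarTower.algebraMap_apply K A _ k)

theorem fractionRingMap_injective : Function.Injective K.fractionRingMap :=
  K.fractionRingMap.toRingHom.injective

variable {K}

theorem fractionRingMap_div_eq {a b : K} (hb : (b : A) ≠ 0) {x : A} (hx : b * x = a) :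
    K.fractionRingMap (algebraMap K _ a / algebraMap K _ b) = algebraMap A (FractionRing A) x := by
  have hb' : algebraMap A (FractionRing A) b ≠ 0 :=
    (map_ne_zero_iff _ (IsFractionRing.injective A _)).mpr hb
  rw [map_div₀, fractionRingMap_algebraMap, fractionRingMap_algebraMap, ← hx, map_mul,
    mul_div_cancel_left₀ _ hb']

theorem mem_of_mul_mem_of_isIntegral [IsIntegrallyClosed K] {b x : A} (hb : b ∈ K) (hb0 : b ≠ 0)
    (hbx : b * x ∈ K) (hx : IsIntegral K x) : x ∈ K := by
  have hq := fractionRingMap_div_eq (a := ⟨_, hbx⟩) (b := ⟨b, hb⟩) hb0 rfl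
  have hq_int : IsIntegral K (algebraMap K (FractionRing K) ⟨_, hbx⟩ / algebraMap K _ ⟨b, hb⟩) := by
    rw [← isIntegral_algHom_iff _ K.fractionRingMap_injective, hq]
    exact hx.map (IsScalarTower.toAlgHom K A (FractionRing A))
  obtain ⟨y, hy⟩ := IsIntegrallyClosed.isIntegral_iff.mp hq_int
  have hyx : algebraMap A (FractionRing A) y = algebraMap A _ x := by
    rw [← hq, ← hy, fractionRingMap_algebraMap]
  exact IsFractionRing.injective A (FractionRing A) hyx ▸ y.2

theorem isIntegrallyClosed_of_forall_mul_mem [IsIntegrallyClosed A]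
    (h : ∀ ⦃b x : A⦄, b ∈ K → b ≠ 0 → b * x ∈ K → IsIntegral K x → x ∈ K) :
    IsIntegrallyClosed K := by
  refine (isIntegrallyClosed_iff (FractionRing K)).mpr fun {q} hq => ?_
  obtain ⟨a, b, hb, rfl⟩ := IsFractionRing.div_surjective K q
  have hb0 : (b : A) ≠ 0 := by simpa using nonZeroDivisors.ne_zero hb
  obtain ⟨x, hx⟩ := IsIntegrallyClosed.isIntegral_iff.mp <|
    ((isIntegral_algHom_iff _ K.fractionRingMap_injective).mpr hq).tower_top (A := A)
  have hxint : IsIntegral K x := by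
    rw [← isIntegral_algHom_iff (IsScalarTower.toAlgHom K A (FractionRing A))
      (IsFractionRing.injective A _), IsScalarTower.coe_toAlgHom', hx]
    exact (isIntegral_algHom_iff _ K.fractionRingMap_injective).mpr hq
  have hbx : (b : A) * x = a := by
    apply IsFractionRing.injective A (FractionRing A)
    rw [map_mul, hx, ← fractionRingMap_algebraMap, ← fractionRingMap_algebraMap, ← map_mul,
      mul_div_cancel₀]
    exact IsFractionRing.to_map_ne_zero_of_mem_nonZeroDivisors hb
  refine ⟨⟨x, h b.2 hb0 (hbx ▸ a.2) hxint⟩, K.fractionRingMap_injective ?_⟩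
  rw [fractionRingMap_algebraMap, fractionRingMap_div_eq hb0 hbx]

theorem isDedekindDomain_iff_forall_mul_mem [IsIntegrallyClosed A] [IsNoetherianRing K]
    [Ring.DimensionLEOne K] [Algebra.IsIntegral K A] :
    IsDedekindDomain K ↔ ∀ ⦃b x : A⦄, b ∈ K → b ≠ 0 → b * x ∈ K → x ∈ K := by
  refine ⟨fun _ b x hb hb0 hbx => mem_of_mul_mem_of_isIntegral hb hb0 hbx
    (Algebra.IsIntegral.isIntegral x), fun h => ?_⟩
  have : IsIntegrallyClosed K :=
    isIntegrallyClosed_of_forall_mul_mem fun b x hb hb0 hbx _ => h hb hb0 hbx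
  exact {}

variable {F : Subring A}

theorem mem_of_mul_mem_of_forall_mul_mem [Algebra F K] [IsScalarTower F K A]
    [Algebra.IsIntegral F K] (h : ∀ ⦃c x : A⦄, c ∈ F → c ≠ 0 → c * x ∈ K → x ∈ K) {b x : A}
    (hb : b ∈ K) (hb0 : b ≠ 0) (hbx : b * x ∈ K) : x ∈ K := by
  obtain ⟨c, hc0, k, hk⟩ := Algebra.IsIntegral.exists_ne_zero_dvd_algebraMap (R := F)
    (show (⟨b, hb⟩ : K) ≠ 0 from fun hb' => hb0 congr(($hb' : A)))
  have hck : (c : A) = b * k :=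
    calc (c : A) = algebraMap K A (algebraMap F K c) := IsScalarTower.algebraMap_apply F K A c
      _ = b * k := congr((↑$hk : A))
  refine h c.2 (by simpa using hc0) ?_
  rw [hck, mul_right_comm]
  exact K.mul_mem hbx k.2

end Subring

theorem isTorsionFree_quotient_subringSubmodule_iff (F K : Subring L) (hFK : F ≤ K) :
    IsTorsionFree F (L ⧸ subringSubmodule L F K hFK) ↔
      ∀ ⦃c x : L⦄, c ∈ F → c ≠ 0 → c * x ∈ K → x ∈ K := by
  have mk_eq_zero (x : L) :
      (Submodule.Quotient.mk x : L ⧸ subringSubmodule L F K hFK) = 0 ↔ x ∈ K :=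
    Submodule.Quotient.mk_eq_zero _
  have smul_mk_eq_zero (c : F) (x : L) :
      c • (Submodule.Quotient.mk x : L ⧸ subringSubmodule L F K hFK) = 0 ↔ (c : L) * x ∈ K := by
    rw [← Submodule.Quotient.mk_smul, mk_eq_zero]; rfl
  simp only [isTorsionFree_iff_smul_eq_zero, (Submodule.Quotient.mk_surjective _).forall,
    smul_mk_eq_zero, mk_eq_zero, Subtype.forall, ← Subring.coe_eq_zero_iff]
  exact ⟨fun h c x hc hc0 hcx => (h c hc x hcx).resolve_left hc0,
    fun h c hc x hcx => or_iff_not_imp_left.mpr fun hc0 => h hc hc0 hcx⟩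

theorem statement11 (F K : Subring L) (hFK : F ≤ K)
    (hL : IsDedekindDomain L) (hF : IsDedekindDomain ↥F)
    (hfin : Module.Finite ↥F L) :
    IsDedekindDomain ↥K ↔
      Module.Projective ↥F (L ⧸ subringSubmodule L F K hFK) := by
  let : Algebra F K := (Subring.inclusion hFK).toAlgebra
  have : IsScalarTower F K L := .of_algebraMap_eq fun _ => rfl
  have : IsNoetherian F K :=
    isNoetherian_of_injective (IsScalarTower.toAlgHom F K L).toLinearMap Subtype.val_injective
  have : IsNoetherianRing K := isNoetherian_of_tower F inferInstance
  have : Ring.DimensionLEOne K := .of_isIntegral F K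
  have : Algebra.IsIntegral K L := .tower_top F
  rw [IsDedekindDomain.projective_iff_isTorsionFree, isTorsionFree_quotient_subringSubmodule_iff,
    K.isDedekindDomain_iff_forall_mul_mem]
  exact ⟨fun h c x hc => h (hFK hc), Subring.mem_of_mul_mem_of_forall_mul_mem⟩
end
end

section
/- For every x ∈ k_∞ with 0 < |x|_∞ < 1 one has e*(x) ≠ 0. -/
noncomputable section
open scoped Classical
set_option synthInstance.maxHeartbeats 1000000
set_option maxHeartbeats 1000000

variable (Fq : Type) [Field Fq] [Fintype Fq]
variable (C : Type) [NormedField C] [CompleteSpace C] [IsAlgClosed C]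
  [Algebra (RatFunc Fq) C]

/-- The natural map `Fq → C_∞`. -/
def thetaF : Fq →+* C := (thetaP Fq C).comp Polynomial.C

/-- `D_n = ∏_{i=0}^{n-1} (T^{qⁿ} - T^{qⁱ})`. -/
def Dn (n : ℕ) : C :=
  ∏ i ∈ Finset.range n,
    (Tc Fq C ^ (Fintype.card Fq ^ n) - Tc Fq C ^ (Fintype.card Fq ^ i))

/-- The Carlitz exponential `exp_C(z) = Σ_{n≥0} z^{qⁿ}/D_n`. -/
def expC (z : C) : C := ∑' n : ℕ, z ^ (Fintype.card Fq ^ n) / Dn Fq C n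

/-- `ϖ = T·T̃·∏_{i=1}^∞ (1 - T^{1-qⁱ})⁻¹`. -/
def varpi (Ttil : C) : C :=
  Tc Fq C * Ttil *
    (∏' i : ℕ, (1 - (Tc Fq C) ^ ((1 : ℤ) - (Fintype.card Fq : ℤ) ^ (i + 1))))⁻¹

/-- `e(x) = exp_C(ϖ x)`. -/
def eFun (Ttil : C) (x : C) : C := expC Fq C (varpi Fq C Ttil * x)

/-- The `i`-th Maclaurin coefficient `a_i` of
`Ω^{(-1)}(t) = T̃^{-1}·∏_{i=0}^∞ (1 - t/T^{qⁱ})` (infinite product expanded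
coefficientwise). -/
def OmegaNegCoeff (Ttil : C) (n : ℕ) : C :=
  Ttil⁻¹ * (-1) ^ n *
    ∑' s : {s : Finset ℕ // s.card = n},
      ∏ i ∈ s.1, (Tc Fq C ^ (Fintype.card Fq ^ i))⁻¹

/-- `e*(x) = Σ_{i≥0} Res(Tⁱx)·a_i`, where `Res : k_∞ → Fq` is the residue functional. -/
def estar (Res : C → Fq) (Ttil : C) (x : C) : C :=
  ∑' i : ℕ, thetaF Fq C (Res (Tc Fq C ^ i * x)) * OmegaNegCoeff Fq C Ttil i

/-- The hypotheses characterizing the residue functional `Res : k_∞ → Fq`: it is the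
unique `Fq`-linear functional on `k_∞` with kernel `Fq[T] + T^{-2}·Fq[[1/T]]`
(equivalently, `Res x = 0` iff `x` is within distance `q^{-2}` of some polynomial)
and `Res(1/T) = 1`. -/
def IsRes (Res : C → Fq) : Prop :=
  (∀ x ∈ Kinf Fq C, ∀ y ∈ Kinf Fq C, Res (x + y) = Res x + Res y) ∧
  (∀ c : Fq, ∀ x ∈ Kinf Fq C, Res (thetaF Fq C c * x) = c * Res x) ∧
  (∀ x ∈ Kinf Fq C,
    (Res x = 0 ↔ ∃ a : Polynomial Fq,
      ‖x - thetaP Fq C a‖ ≤ (Fintype.card Fq : ℝ) ^ (-2 : ℤ))) ∧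
  Res (Tc Fq C)⁻¹ = 1

/-!
The coefficient `a_n` of `Ω^(-1)` is `(-1)ⁿ T̃⁻¹` times the elementary symmetric sum of the
`T^{-qⁱ}`, whose monomial `∏_{i<n} T^{-qⁱ}` strictly dominates, so
`|a_n| = |T̃|⁻¹ q^{-(1 + q + ⋯ + q^{n-1})}` is strictly decreasing. Some `T^i x` has
`q⁻¹ ≤ |T^i x| < 1`; as a nonzero polynomial has absolute value at least `1`, such an element is
not within `q⁻²` of `A`, so its residue is nonzero. In the ultrametric series `e*(x)` the term at
the first index with nonzero residue then dominates all others, hence `e*(x) ≠ 0`.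
-/

open Filter Topology

theorem IsUltrametricDist.norm_tsum_eq_of_dominant {ι E : Type*} [NormedAddCommGroup E]
    [IsUltrametricDist E] {f : ι → E} (hf : Summable f) (i₀ : ι) {c : ℝ} (hc : 0 ≤ c)
    (hle : ∀ i ≠ i₀, ‖f i‖ ≤ c) (hlt : c < ‖f i₀‖) :
    ‖∑' i, f i‖ = ‖f i₀‖ := by
  have hrest : ‖∑' i, if i = i₀ then 0 else f i‖ < ‖f i₀‖ := by
    refine (norm_tsum_le_of_forall_le_of_nonneg hc fun i => ?_).trans_lt hlt
    split_ifs with h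
    · simpa using hc
    · exact hle i h
  rw [hf.tsum_eq_add_tsum_ite i₀, norm_add_eq_max_of_norm_ne_norm hrest.ne',
    max_eq_left hrest.le]

theorem tendsto_inv_pow_cofinite_zero {ι : Type*} {r : ℝ} (hr : 1 < r) {w : ι → ℕ}
    (hw : Function.Injective w) : Tendsto (fun i => (r ^ w i)⁻¹) cofinite (𝓝 0) := by
  have hw' : Tendsto w cofinite atTop := Nat.cofinite_eq_atTop ▸ hw.tendsto_cofinite
  exact tendsto_inv_atTop_zero.comp ((tendsto_pow_atTop_atTop_of_one_lt hr).comp hw')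

theorem exists_pow_mul_mem_Ico {r y : ℝ} (hr : 1 < r) (hy₀ : 0 < y) (hy₁ : y < 1) :
    ∃ i : ℕ, r ^ i * y ∈ Set.Ico r⁻¹ 1 := by
  obtain ⟨n, hn_le, hlt_n⟩ := exists_mem_Ico_zpow hy₀ hr
  have hn : n < 0 := by
    by_contra! h
    exact (hy₁.trans_le (one_le_zpow₀ hr.le h)).not_ge hn_le
  refine ⟨(-(n + 1)).toNat, ?_⟩
  have hr₀ : 0 < r := by linarith
  rw [← zpow_natCast, Int.toNat_of_nonneg (by omega)]
  constructor
  · calc r⁻¹ = r ^ (-(n + 1)) * r ^ n := by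
          rw [← zpow_add₀ hr₀.ne', show -(n + 1) + n = -1 by ring, zpow_neg_one]
      _ ≤ r ^ (-(n + 1)) * y := by gcongr
  · calc r ^ (-(n + 1)) * y < r ^ (-(n + 1)) * r ^ (n + 1) := by gcongr
      _ = 1 := by rw [← zpow_add₀ hr₀.ne', neg_add_cancel, zpow_zero]

theorem Nat.pow_le_geomSum_of_card_eq {q n : ℕ} (hq : 0 < q) {s : Finset ℕ} (hs : s.card = n)
    (hne : s ≠ Finset.range n) : q ^ n ≤ ∑ i ∈ s, q ^ i := by
  obtain ⟨m, hm, hnm⟩ : ∃ m ∈ s, n ≤ m := by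
    by_contra! h
    exact hne (Finset.eq_of_subset_of_card_le (fun i hi => Finset.mem_range.2 (h i hi))
      (by simp [hs]))
  exact (Nat.pow_le_pow_right hq hnm).trans (Finset.single_le_sum (by simp) hm)

theorem norm_map_polynomial_eq_pow_natDegree {R K : Type*} [Semiring R] [NormedDivisionRing K]
    [IsUltrametricDist K] (φ : Polynomial R →+* K) (hC : ∀ c ≠ 0, ‖φ (Polynomial.C c)‖ = 1)
    (hX : 1 < ‖φ Polynomial.X‖) {p : Polynomial R} (hp : p ≠ 0) :
    ‖φ p‖ = ‖φ Polynomial.X‖ ^ p.natDegree := by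
  have hterm : ∀ i ∈ p.support,
      ‖φ (Polynomial.C (p.coeff i) * Polynomial.X ^ i)‖ = ‖φ Polynomial.X‖ ^ i := fun i hi => by
    rw [map_mul, map_pow, norm_mul, norm_pow, hC _ (Polynomial.mem_support_iff.1 hi), one_mul]
  have hsupp : p.support.Nonempty := Polynomial.nonempty_support_iff.2 hp
  have hinj := pow_right_injective₀ (zero_lt_one.trans hX) hX.ne'
  conv_lhs => rw [p.as_sum_support_C_mul_X_pow, map_sum]
  rw [IsUltrametricDist.norm_sum_eq_sup'_of_pairwise_ne hsupp fun i hi j hj hij => by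
    simpa only [hterm i hi, hterm j hj] using hinj.ne hij]
  have hdeg := Polynomial.natDegree_mem_support_of_nonzero hp
  refine le_antisymm (Finset.sup'_le _ _ fun i hi => ?_)
    (Finset.le_sup'_of_le _ hdeg (hterm _ hdeg).ge)
  rw [hterm i hi]
  exact pow_le_pow_right₀ hX.le (Polynomial.le_natDegree_of_mem_supp i hi)

theorem norm_tsum_prod_inv_pow_pow {K : Type*} [NormedField K] [CompleteSpace K]
    [IsUltrametricDist K] {t : K} (ht : 1 < ‖t‖) {q : ℕ} (hq : 2 ≤ q) (n : ℕ) :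
    ‖∑' s : {s : Finset ℕ // s.card = n}, ∏ i ∈ s.1, (t ^ q ^ i)⁻¹‖
      = (‖t‖ ^ ∑ i ∈ Finset.range n, q ^ i)⁻¹ := by
  have hterm : ∀ s : Finset ℕ, ‖∏ i ∈ s, (t ^ q ^ i)⁻¹‖ = (‖t‖ ^ ∑ i ∈ s, q ^ i)⁻¹ := fun s => by
    simp only [norm_inv, norm_pow, Finset.prod_inv_distrib, Finset.prod_pow_eq_pow_sum]
  -- `s ↦ ∑ i ∈ s, q ^ i` is injective (base-`q` expansion), so few terms are large.
  have hsum : Summable fun s : {s : Finset ℕ // s.card = n} => ∏ i ∈ s.1, (t ^ q ^ i)⁻¹ := by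
    refine NonarchimedeanAddGroup.summable_of_tendsto_cofinite_zero ?_
    rw [tendsto_zero_iff_norm_tendsto_zero]
    simp only [hterm]
    exact tendsto_inv_pow_cofinite_zero ht ((Finset.geomSum_injective hq).comp Subtype.val_injective)
  have hpos : 0 < ‖t‖ := zero_lt_one.trans ht
  rw [IsUltrametricDist.norm_tsum_eq_of_dominant hsum ⟨Finset.range n, Finset.card_range n⟩
      (c := (‖t‖ ^ q ^ n)⁻¹) (by positivity) ?_ ?_, hterm]
  · rintro ⟨s, hs⟩ hne
    rw [hterm]
    gcongr
    · exact ht.le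
    · exact Nat.pow_le_geomSum_of_card_eq (by omega) hs fun h => hne (Subtype.ext h)
  · rw [hterm]
    gcongr
    exact Nat.geomSum_lt hq fun k hk => Finset.mem_range.1 hk

theorem Nat.strictMono_geomSum_range {q : ℕ} (hq : 0 < q) :
    StrictMono fun n => ∑ i ∈ Finset.range n, q ^ i :=
  strictMono_nat_of_lt_succ fun n => by
    rw [Finset.sum_range_succ]
    exact Nat.lt_add_of_pos_right (pow_pos hq n)

theorem tsum_mul_ne_zero_of_strictAnti_norm {K : Type*} [NormedDivisionRing K] [CompleteSpace K]
    [IsUltrametricDist K] {a b : ℕ → K} (ha : Tendsto a atTop (𝓝 0))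
    (ha' : StrictAnti fun i => ‖a i‖) (hb : ∀ i, b i ≠ 0 → ‖b i‖ = 1) (hb₀ : ∃ i, b i ≠ 0) :
    ∑' i, b i * a i ≠ 0 := by
  have hle : ∀ i, ‖b i * a i‖ ≤ ‖a i‖ := fun i => by
    rw [norm_mul]
    refine mul_le_of_le_one_left (norm_nonneg _) ?_
    rcases eq_or_ne (b i) 0 with h | h
    · simp [h]
    · exact (hb i h).le
  have hsum : Summable fun i => b i * a i :=
    NonarchimedeanAddGroup.summable_of_tendsto_cofinite_zero <| Nat.cofinite_eq_atTop ▸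
      squeeze_zero_norm hle (tendsto_zero_iff_norm_tendsto_zero.1 ha)
  set i₀ := Nat.find hb₀
  have hlt : ‖a (i₀ + 1)‖ < ‖b i₀ * a i₀‖ := by
    rw [norm_mul, hb _ (Nat.find_spec hb₀), one_mul]
    exact ha' (Nat.lt_succ_self i₀)
  rw [← norm_pos_iff, IsUltrametricDist.norm_tsum_eq_of_dominant hsum i₀ (norm_nonneg _) ?_ hlt]
  · exact (norm_nonneg _).trans_lt hlt
  · intro i hi
    rcases hi.lt_or_gt with h | h
    · rw [of_not_not (Nat.find_min hb₀ h), zero_mul, norm_zero]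
      exact norm_nonneg _
    · exact (hle i).trans (ha'.antitone h)

section Carlitz

variable {F : Type} [Field F] {K : Type} [NormedField K] [Algebra (RatFunc F) K]

theorem Tc_mem_Kinf : Tc F K ∈ Kinf F K :=
  Subfield.le_topologicalClosure _ ⟨algebraMap (Polynomial F) (RatFunc F) Polynomial.X, rfl⟩

variable [Fintype F]

theorem norm_thetaF {c : F} (hc : c ≠ 0) : ‖thetaF F K c‖ = 1 :=
  IsOfFinOrder.norm_eq_one <| (thetaF F K).toMonoidHom.isOfFinOrder <|
    isOfFinOrder_iff_pow_eq_one.2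
      ⟨_, Nat.sub_pos_of_lt Fintype.one_lt_card, FiniteField.pow_card_sub_one_eq_one c hc⟩

theorem norm_thetaP [IsUltrametricDist K] (hT : ‖Tc F K‖ = Fintype.card F) {a : Polynomial F}
    (ha : a ≠ 0) : ‖thetaP F K a‖ = (Fintype.card F : ℝ) ^ a.natDegree := by
  have hX : 1 < ‖thetaP F K Polynomial.X‖ := by
    rw [← Tc, hT]
    exact_mod_cast Fintype.one_lt_card
  rw [norm_map_polynomial_eq_pow_natDegree _ (fun c hc => norm_thetaF hc) hX ha, ← Tc, hT]

theorem IsRes.apply_ne_zero_of_norm_mem_Ico [IsUltrametricDist K]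
    (hT : ‖Tc F K‖ = Fintype.card F) {Res : K → F} (hRes : IsRes F K Res) {y : K}
    (hy : y ∈ Kinf F K) (hy' : ‖y‖ ∈ Set.Ico (Fintype.card F : ℝ)⁻¹ 1) : Res y ≠ 0 := by
  have hq : (1 : ℝ) < Fintype.card F := by exact_mod_cast Fintype.one_lt_card
  intro h₀
  obtain ⟨a, ha⟩ := (hRes.2.2.1 y hy).1 h₀
  have hclose : ‖-(y - thetaP F K a)‖ < ‖y‖ := by
    rw [norm_neg]
    refine ha.trans_lt ((zpow_lt_zpow_right₀ hq (by norm_num : (-2 : ℤ) < -1)).trans_le ?_)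
    rw [zpow_neg_one]
    exact hy'.1
  have hnorm : ‖thetaP F K a‖ = ‖y‖ := by
    rw [show thetaP F K a = y + -(y - thetaP F K a) by abel,
      IsUltrametricDist.norm_add_eq_max_of_norm_ne_norm hclose.ne', max_eq_left hclose.le]
  rcases eq_or_ne a 0 with rfl | ha₀
  · rw [map_zero, norm_zero] at hnorm
    exact (hnorm ▸ hy'.1).not_gt (by positivity)
  · rw [norm_thetaP hT ha₀] at hnorm
    exact (hnorm ▸ hy'.2).not_ge (one_le_pow₀ hq.le)

theorem IsRes.exists_apply_pow_mul_ne_zero [IsUltrametricDist K]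
    (hT : ‖Tc F K‖ = Fintype.card F) {Res : K → F} (hRes : IsRes F K Res) {x : K}
    (hx : x ∈ Kinf F K) (hx₀ : 0 < ‖x‖) (hx₁ : ‖x‖ < 1) : ∃ i : ℕ, Res (Tc F K ^ i * x) ≠ 0 := by
  have hq : (1 : ℝ) < Fintype.card F := by exact_mod_cast Fintype.one_lt_card
  obtain ⟨i, hi⟩ := exists_pow_mul_mem_Ico hq hx₀ hx₁
  refine ⟨i, hRes.apply_ne_zero_of_norm_mem_Ico hT (mul_mem (pow_mem Tc_mem_Kinf i) hx) ?_⟩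
  rwa [norm_mul, norm_pow, hT]

variable [CompleteSpace K] [IsUltrametricDist K]

theorem norm_omegaNegCoeff (hT : ‖Tc F K‖ = Fintype.card F) (Ttil : K) (n : ℕ) :
    ‖OmegaNegCoeff F K Ttil n‖
      = ‖Ttil⁻¹‖ * ((Fintype.card F : ℝ) ^ ∑ i ∈ Finset.range n, Fintype.card F ^ i)⁻¹ := by
  have ht : 1 < ‖Tc F K‖ := by
    rw [hT]
    exact_mod_cast Fintype.one_lt_card
  rw [OmegaNegCoeff, norm_mul, norm_mul, norm_pow, norm_neg, norm_one, one_pow, mul_one,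
    norm_tsum_prod_inv_pow_pow ht Fintype.one_lt_card, hT]

theorem tendsto_omegaNegCoeff_zero (hT : ‖Tc F K‖ = Fintype.card F) (Ttil : K) :
    Tendsto (OmegaNegCoeff F K Ttil) atTop (𝓝 0) := by
  rw [tendsto_zero_iff_norm_tendsto_zero]
  simp only [norm_omegaNegCoeff hT]
  rw [← mul_zero ‖Ttil⁻¹‖, ← Nat.cofinite_eq_atTop]
  exact (tendsto_inv_pow_cofinite_zero (by exact_mod_cast Fintype.one_lt_card)
    (Nat.strictMono_geomSum_range Fintype.card_pos).injective).const_mul _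

theorem strictAnti_norm_omegaNegCoeff (hT : ‖Tc F K‖ = Fintype.card F) {Ttil : K}
    (hTtil : Ttil ≠ 0) : StrictAnti fun n => ‖OmegaNegCoeff F K Ttil n‖ := by
  have hq : (1 : ℝ) < Fintype.card F := by exact_mod_cast Fintype.one_lt_card
  intro m n hmn
  simp only [norm_omegaNegCoeff hT]
  gcongr
  · exact norm_pos_iff.2 (inv_ne_zero hTtil)
  · exact Nat.strictMono_geomSum_range Fintype.card_pos hmn

end Carlitz

theorem statement17
    (hna : ∀ x y : C, ‖x + y‖ ≤ max ‖x‖ ‖y‖)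
    (hT : ‖Tc Fq C‖ = (Fintype.card Fq : ℝ))
    (Ttil : C) (hTtil : Ttil ^ (Fintype.card Fq - 1) = -Tc Fq C)
    (Res : C → Fq) (hRes : IsRes Fq C Res)
    (x : C) (hx : x ∈ Kinf Fq C) (hx0 : 0 < ‖x‖) (hx1 : ‖x‖ < 1) :
    estar Fq C Res Ttil x ≠ 0 := by
  have : IsUltrametricDist C := .isUltrametricDist_of_forall_norm_add_le_max_norm hna
  have hTtil₀ : Ttil ≠ 0 := by
    rintro rfl
    rw [zero_pow (Nat.sub_ne_zero_of_lt Fintype.one_lt_card), eq_comm, neg_eq_zero] at hTtil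
    rw [hTtil, norm_zero] at hT
    exact Fintype.card_ne_zero (by exact_mod_cast hT.symm)
  obtain ⟨i, hi⟩ := hRes.exists_apply_pow_mul_ne_zero hT hx hx0 hx1
  exact tsum_mul_ne_zero_of_strictAnti_norm (tendsto_omegaNegCoeff_zero hT Ttil)
    (strictAnti_norm_omegaNegCoeff hT hTtil₀)
    (fun j hj => norm_thetaF fun h => hj (by rw [h, map_zero])) ⟨i, (map_ne_zero _).2 hi⟩
end
end
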